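/- Let D ≥ 1 be an integer, g_c := D^D/(D+1)^{D+1}, and define the leading-order free energy E_LO(g) := Σ_{p≥1} (C_p^{(D+1)}/p)·g^p for 0 ≤ g < g_c, where C_p^{(D+1)} := (1/((D+1)p+1))·binom((D+1)p+1, p); this function satisfies g·E_LO'(g) = G_LO(g) − 1. Then lim_{g→g_c⁻} √(1 − g/g_c) · E_LO''(g) = (1/g_c)·((D+1)/D)^{D+2}·√(D/(2(D+1))); i.e., the leading-order free energy has critical behaviour (1 − g/g_c)^{2 − γ} with susceptibility exponent γ_LO = 1/2. -/

import Mathlib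

/-!
The Raney numbers `R(a, k) = a / (a + b k) · C(a + b k, k)`, the coefficients of `B ^ a`
where `B = 1 + g B ^ b`, satisfy `∑_{i+j=n} R(a, i) R(c, j) = R(a + c, n)`, and
`R(1, k) = C_k^(D+1)` for `b = D + 1`. For `0 ≤ g < g_c` the partial sums of
`∑ R(a, k) g ^ k` are bounded by `G_LO(g) ^ a`, so the Fuss–Catalan series converges, and by
the convolution its sum solves the melonic equation in `[1, (D+1)/D]`, hence equals `G_LO(g)`.
Termwise differentiation gives `g E_LO' = G_LO - 1`.

`G_LO` is the inverse of `ψ(x) = (x - 1) / x ^ (D + 1)`, which is increasing on `[1, (D+1)/D]`, so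
`G_LO' = G_LO ^ (D + 2) / ((D + 1) - D G_LO)`. Since `g_c - ψ` has a double zero at `(D+1)/D`,
`(D + 1) - D G_LO(g) ~ √(2 (D + 1) / D) · √(1 - g / g_c)`, and this square-root singularity of
`G_LO'` is the one of `E_LO''`.
-/

/-- The Fuss–Catalan number `C_p^(D+1) = (1/((D+1)p+1))·binom((D+1)p+1, p)`, as a real number. -/
noncomputable def fussCatalan (D p : ℕ) : ℝ :=
  (1 / (((D + 1) * p + 1 : ℕ) : ℝ)) * (Nat.choose ((D + 1) * p + 1) p : ℝ)

open Filter Topology Set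

noncomputable def raney (b a k : ℕ) : ℝ :=
  if k = 0 then 1 else a / (a + b * k) * ((a + b * k).choose k : ℝ)

section Raney

open Finset

variable {b : ℕ}

@[simp] lemma raney_zero_right (b a : ℕ) : raney b a 0 = 1 := if_pos rfl

lemma raney_zero_left {k : ℕ} (hk : k ≠ 0) : raney b 0 k = 0 := by simp [raney, hk]

lemma raney_nonneg (b a k : ℕ) : 0 ≤ raney b a k := by
  unfold raney; split_ifs <;> positivity

lemma raney_eq_of_pos {a k : ℕ} (h : 0 < a + b * k) :
    raney b a k = a / (a + b * k) * ((a + b * k).choose k : ℝ) := by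
  rcases eq_or_ne k 0 with rfl | hk
  · have : (a : ℝ) ≠ 0 := by simpa using h.ne'
    simp [raney, this]
  · exact if_neg hk

lemma raney_succ_succ (hb : 0 < b) (a k : ℕ) :
    raney b (a + 1) (k + 1) = raney b a (k + 1) + raney b (a + b) k := by
  set n := a + b * (k + 1) with hn
  have hn1 : a + 1 + b * (k + 1) = n + 1 := by omega
  have hn2 : a + b + b * k = n := by rw [hn]; ring
  have hkn : k ≤ n := by nlinarith
  rw [raney_eq_of_pos (by omega), raney_eq_of_pos (by positivity), raney_eq_of_pos (by positivity)]
  have hk1 : (k : ℝ) + 1 ≠ 0 := by positivity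
  have hX : ((n + 1).choose (k + 1) : ℝ) = (n + 1) * n.choose k / (k + 1) := by
    rw [eq_div_iff hk1]; exact_mod_cast (Nat.add_one_mul_choose_eq n k).symm
  have hY : (n.choose (k + 1) : ℝ) = n.choose k * (n - k) / (k + 1) := by
    rw [eq_div_iff hk1, ← Nat.cast_sub hkn]; exact_mod_cast Nat.choose_succ_right_eq n k
  have hnR : (n : ℝ) = a + b * (k + 1) := by rw [hn]; push_cast; ring
  rw [hn1, hn2]
  push_cast
  rw [hX, hY, hnR]
  field_simp
  ring

lemma raney_one_succ (hb : 0 < b) (k : ℕ) : raney b 1 (k + 1) = raney b b k := by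
  simpa [raney_zero_left] using raney_succ_succ hb 0 k

theorem sum_antidiagonal_raney (hb : 0 < b) (n a c : ℕ) :
    ∑ ij ∈ antidiagonal n, raney b a ij.1 * raney b c ij.2 = raney b (a + c) n := by
  induction n generalizing a with
  | zero => simp
  | succ m ih =>
    induction a with
    | zero => simp [Nat.sum_antidiagonal_succ, raney_zero_left]
    | succ a iha =>
      rw [Nat.sum_antidiagonal_succ] at iha ⊢
      simp only [raney_succ_succ hb, add_mul, sum_add_distrib, ih, raney_zero_right] at iha ⊢
      rw [show a + 1 + c = a + c + 1 by ring, raney_succ_succ hb, ← iha,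
        show a + b + c = a + c + b by ring]
      ring

lemma sum_antidiagonal_raney_mul_pow (hb : 0 < b) (n a c : ℕ) (g : ℝ) :
    ∑ ij ∈ antidiagonal n, raney b a ij.1 * g ^ ij.1 * (raney b c ij.2 * g ^ ij.2) =
      raney b (a + c) n * g ^ n := by
  rw [← sum_antidiagonal_raney hb, sum_mul]
  refine sum_congr rfl fun ij hij => ?_
  rw [← mem_antidiagonal.mp hij, pow_add]
  ring

variable {g X : ℝ}

lemma sum_range_raney_mul_pow_le (hb : 0 < b) (hg : 0 ≤ g) (hX : 0 ≤ X)
    (hXeq : X = 1 + g * X ^ b) (N a : ℕ) : ∑ k ∈ range N, raney b a k * g ^ k ≤ X ^ a := by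
  induction N generalizing a with
  | zero => simpa using pow_nonneg hX a
  | succ N ihN =>
    induction a with
    | zero => simp [sum_range_succ', raney_zero_left]
    | succ a iha =>
      have hrec : ∑ k ∈ range (N + 1), raney b (a + 1) k * g ^ k =
          ∑ k ∈ range (N + 1), raney b a k * g ^ k +
            g * ∑ k ∈ range N, raney b (a + b) k * g ^ k := by
        have hterm : ∀ k, raney b (a + b) k * g ^ (k + 1) = g * (raney b (a + b) k * g ^ k) :=
          fun k => by ring
        simp only [sum_range_succ' _ N, raney_succ_succ hb, raney_zero_right, add_mul,
          sum_add_distrib, hterm, ← mul_sum]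
        ring
      calc _ = _ := hrec
        _ ≤ X ^ a + g * X ^ (a + b) := add_le_add iha (mul_le_mul_of_nonneg_left (ihN _) hg)
        _ = X ^ a * (1 + g * X ^ b) := by ring
        _ = X ^ (a + 1) := by rw [← hXeq, pow_succ]

lemma summable_raney_mul_pow (hb : 0 < b) (hg : 0 ≤ g) (hX : 0 ≤ X) (hXeq : X = 1 + g * X ^ b)
    (a : ℕ) : Summable fun k => raney b a k * g ^ k :=
  summable_of_sum_range_le (fun k => mul_nonneg (raney_nonneg b a k) (pow_nonneg hg k))
    (sum_range_raney_mul_pow_le hb hg hX hXeq · a)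

lemma tsum_raney_mul_pow_le (hb : 0 < b) (hg : 0 ≤ g) (hX : 0 ≤ X) (hXeq : X = 1 + g * X ^ b)
    (a : ℕ) : ∑' k, raney b a k * g ^ k ≤ X ^ a :=
  Real.tsum_le_of_sum_range_le (fun k => mul_nonneg (raney_nonneg b a k) (pow_nonneg hg k))
    (sum_range_raney_mul_pow_le hb hg hX hXeq · a)

theorem tsum_raney_mul_pow (hb : 0 < b) (hg : 0 ≤ g) (hX : 0 ≤ X) (hXeq : X = 1 + g * X ^ b)
    (a : ℕ) : ∑' k, raney b a k * g ^ k = (∑' k, raney b 1 k * g ^ k) ^ a := by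
  have hnorm : ∀ a, Summable fun k => ‖raney b a k * g ^ k‖ := fun a =>
    (summable_raney_mul_pow hb hg hX hXeq a).congr fun k =>
      (Real.norm_of_nonneg (mul_nonneg (raney_nonneg b a k) (pow_nonneg hg k))).symm
  induction a with
  | zero => exact (tsum_eq_single 0 fun k hk => by simp [raney_zero_left hk]).trans (by simp)
  | succ a iha =>
    rw [pow_succ', ← iha, tsum_mul_tsum_eq_tsum_sum_antidiagonal_of_summable_norm (hnorm 1)
      (hnorm a)]
    simp only [sum_antidiagonal_raney_mul_pow hb, add_comm 1 a]

theorem tsum_raney_mul_pow_eq_one_add (hb : 0 < b) (hg : 0 ≤ g) (hX : 0 ≤ X)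
    (hXeq : X = 1 + g * X ^ b) :
    ∑' k, raney b 1 k * g ^ k = 1 + g * (∑' k, raney b 1 k * g ^ k) ^ b := by
  rw [← tsum_raney_mul_pow hb hg hX hXeq, ← tsum_mul_left,
    (summable_raney_mul_pow hb hg hX hXeq 1).tsum_eq_zero_add]
  simp only [raney_one_succ hb, raney_zero_right, pow_succ]
  congr 1
  · simp
  · exact tsum_congr fun k => by ring

end Raney

lemma fussCatalan_eq_raney (D p : ℕ) : fussCatalan D p = raney (D + 1) 1 p := by
  rw [raney_eq_of_pos (by positivity), fussCatalan, add_comm 1]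
  push_cast
  ring

lemma fussCatalan_nonneg (D p : ℕ) : 0 ≤ fussCatalan D p :=
  fussCatalan_eq_raney D p ▸ raney_nonneg _ _ _

theorem tendsto_div_sub_sq_of_hasDerivAt {f f' f'' : ℝ → ℝ} {a : ℝ}
    (hf : ∀ x, HasDerivAt f (f' x) x) (hf' : ∀ x, HasDerivAt f' (f'' x) x)
    (hf'' : ContinuousAt f'' a) (h0 : f a = 0) (h1 : f' a = 0) :
    Tendsto (fun x => f x / (x - a) ^ 2) (𝓝[≠] a) (𝓝 (f'' a / 2)) := by
  have hsub : ∀ᶠ x in 𝓝[≠] a, x - a ≠ 0 :=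
    eventually_nhdsWithin_of_forall fun x hx => sub_ne_zero.mpr hx
  have hlim : ∀ {φ : ℝ → ℝ}, ContinuousAt φ a → φ a = 0 →
      Tendsto φ (𝓝[≠] a) (𝓝 0) :=
    fun hφ hφa => hφa ▸ hφ.tendsto.mono_left nhdsWithin_le_nhds
  refine HasDerivAt.lhopital_zero_nhdsNE (f' := f') (g' := fun x => 2 * (x - a))
    (.of_forall fun x => hf x)
    (.of_forall fun x => by simpa using ((hasDerivAt_id x).sub_const a).fun_pow 2) ?_
    (hlim (hf a).continuousAt h0) (hlim (by fun_prop) (by simp)) ?_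
  · filter_upwards [hsub] with x hx using mul_ne_zero two_ne_zero hx
  refine HasDerivAt.lhopital_zero_nhdsNE (.of_forall fun x => hf' x)
    (.of_forall fun x => by simpa using ((hasDerivAt_id x).sub_const a).const_mul 2)
    (.of_forall fun _ => two_ne_zero) (hlim (hf' a).continuousAt h1)
    (hlim (by fun_prop) (by simp)) ?_
  exact (hf''.div_const 2).tendsto.mono_left nhdsWithin_le_nhds

theorem hasDerivAt_tsum_div_succ_mul_pow {c : ℕ → ℝ} {r x : ℝ}
    (hc : Summable fun n => ‖c n‖ * r ^ n) (hx : |x| < r) :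
    HasDerivAt (fun y => ∑' n, c n / (n + 1) * y ^ (n + 1)) (∑' n, c n * x ^ n) x := by
  have hr : 0 < r := (abs_nonneg x).trans_lt hx
  refine hasDerivAt_tsum_of_isPreconnected (g := fun n y => c n / (n + 1) * y ^ (n + 1))
    (g' := fun n y => c n * y ^ n) hc isOpen_Ioo isPreconnected_Ioo (fun n y _ => ?_)
    (fun n y hy => ?_) (y₀ := 0) ⟨neg_lt_zero.mpr hr, hr⟩ (by simp) (abs_lt.mp hx)
  · refine ((hasDerivAt_pow (n + 1) y).const_mul (c n / (n + 1))).congr_deriv ?_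
    rw [Nat.add_sub_cancel]
    push_cast
    field_simp
  · rw [norm_mul, norm_pow]
    gcongr
    exact (abs_lt.mpr hy).le

noncomputable def criticalCoupling (D : ℕ) : ℝ := (D : ℝ) ^ D / ((D : ℝ) + 1) ^ (D + 1)

noncomputable def criticalTwoPoint (D : ℕ) : ℝ := ((D : ℝ) + 1) / D

/-- The melonic equation `G = 1 + g G ^ (D + 1)` solved for the coupling `g`. -/
noncomputable def melonicCoupling (D : ℕ) (x : ℝ) : ℝ := (x - 1) / x ^ (D + 1)

section Melonic

variable {D : ℕ}

lemma criticalCoupling_pos (hD : 1 ≤ D) : 0 < criticalCoupling D := by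
  have : (0 : ℝ) < D := by exact_mod_cast hD
  unfold criticalCoupling; positivity

lemma one_lt_criticalTwoPoint (hD : 1 ≤ D) : 1 < criticalTwoPoint D := by
  have : (0 : ℝ) < D := by exact_mod_cast hD
  rw [criticalTwoPoint, one_lt_div this]; linarith

lemma sub_mul_pos_of_lt_criticalTwoPoint (hD : 1 ≤ D) {x : ℝ} (hx : x < criticalTwoPoint D) :
    0 < (D : ℝ) + 1 - D * x := by
  have : (0 : ℝ) < D := by exact_mod_cast hD
  rw [criticalTwoPoint, lt_div_iff₀ this] at hx; linarith

lemma natCast_mul_criticalTwoPoint (hD : 1 ≤ D) : (D : ℝ) * criticalTwoPoint D = D + 1 := by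
  have : (0 : ℝ) < D := by exact_mod_cast hD
  rw [criticalTwoPoint]; field_simp

lemma criticalCoupling_mul_criticalTwoPoint_pow (hD : 1 ≤ D) :
    criticalCoupling D * criticalTwoPoint D ^ D = 1 / (D + 1) := by
  have : (0 : ℝ) < D := by exact_mod_cast hD
  rw [criticalCoupling, criticalTwoPoint, div_pow, pow_succ]
  field_simp

lemma melonicCoupling_eq_of_eq_one_add {x g : ℝ} (hx : 0 < x) (h : x = 1 + g * x ^ (D + 1)) :
    melonicCoupling D x = g := by
  rw [melonicCoupling, div_eq_iff (pow_pos hx _).ne']; linarith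

lemma melonicCoupling_criticalTwoPoint (hD : 1 ≤ D) :
    melonicCoupling D (criticalTwoPoint D) = criticalCoupling D := by
  refine melonicCoupling_eq_of_eq_one_add (by linarith [one_lt_criticalTwoPoint hD]) ?_
  rw [pow_succ, ← mul_assoc, criticalCoupling_mul_criticalTwoPoint_pow hD, criticalTwoPoint]
  field_simp

lemma hasDerivAt_melonicCoupling {x : ℝ} (hx : x ≠ 0) :
    HasDerivAt (melonicCoupling D) (((D : ℝ) + 1 - D * x) / x ^ (D + 2)) x := by
  refine (((hasDerivAt_id' x).sub_const 1).div (hasDerivAt_pow (D + 1) x)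
    (pow_ne_zero _ hx)).congr_deriv ?_
  rw [Nat.add_sub_cancel]
  field_simp
  push_cast
  ring

lemma strictMonoOn_melonicCoupling (hD : 1 ≤ D) :
    StrictMonoOn (melonicCoupling D) (Icc 1 (criticalTwoPoint D)) := by
  have hderiv : ∀ x ∈ Icc 1 (criticalTwoPoint D), HasDerivAt (melonicCoupling D)
      (((D : ℝ) + 1 - D * x) / x ^ (D + 2)) x :=
    fun x hx => hasDerivAt_melonicCoupling (by linarith [hx.1])
  refine strictMonoOn_of_deriv_pos (convex_Icc _ _)
    (fun x hx => (hderiv x hx).continuousAt.continuousWithinAt) fun x hx => ?_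
  rw [interior_Icc] at hx
  rw [(hderiv x (Ioo_subset_Icc_self hx)).deriv]
  have := sub_mul_pos_of_lt_criticalTwoPoint hD hx.2
  have : 0 < x := by linarith [hx.1]
  positivity

lemma melonicCoupling_mem_Icc (hD : 1 ≤ D) {x : ℝ} (hx : x ∈ Icc 1 (criticalTwoPoint D)) :
    melonicCoupling D x ∈ Icc 0 (criticalCoupling D) := by
  have hmono := (strictMonoOn_melonicCoupling hD).monotoneOn
  have h1 : (1 : ℝ) ∈ Icc 1 (criticalTwoPoint D) :=
    ⟨le_rfl, (one_lt_criticalTwoPoint hD).le⟩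
  have h2 : criticalTwoPoint D ∈ Icc 1 (criticalTwoPoint D) := ⟨h1.2, le_rfl⟩
  refine ⟨?_, ?_⟩
  · simpa [melonicCoupling] using hmono h1 hx hx.1
  · simpa [melonicCoupling_criticalTwoPoint hD] using hmono hx h2 hx.2

lemma tendsto_criticalPolynomial_div_sq (hD : 1 ≤ D) :
    Tendsto (fun x => (criticalCoupling D * x ^ (D + 1) - x + 1) / (x - criticalTwoPoint D) ^ 2)
      (𝓝[≠] criticalTwoPoint D)
      (𝓝 (criticalCoupling D * (D + 1) * (D * criticalTwoPoint D ^ (D - 1)) / 2)) := by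
  set gc := criticalCoupling D
  set Gc := criticalTwoPoint D
  have hkey : gc * Gc ^ D = 1 / (D + 1) := criticalCoupling_mul_criticalTwoPoint_pow hD
  have hDGc : (D : ℝ) + 1 = D * Gc := (natCast_mul_criticalTwoPoint hD).symm
  refine tendsto_div_sub_sq_of_hasDerivAt (f' := fun x => gc * (D + 1) * x ^ D - 1)
    (fun x => ?_) (fun x => ((hasDerivAt_pow D x).const_mul (gc * (D + 1))).sub_const 1)
    (by fun_prop) ?_ ?_
  · refine ((((hasDerivAt_pow (D + 1) x).const_mul gc).sub (hasDerivAt_id x)).add_const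
      1).congr_deriv ?_
    push_cast
    simp [mul_assoc]
  · have : gc * Gc ^ (D + 1) = Gc / (D + 1) := by rw [pow_succ, ← mul_assoc, hkey]; ring
    simp only [this]; field_simp; linarith
  · show gc * (D + 1) * Gc ^ D - 1 = 0
    rw [mul_right_comm, hkey]; field_simp; ring

theorem tendsto_one_sub_melonicCoupling_div_sq (hD : 1 ≤ D) :
    Tendsto (fun x => (1 - melonicCoupling D x / criticalCoupling D) / ((D : ℝ) + 1 - D * x) ^ 2)
      (𝓝[<] criticalTwoPoint D) (𝓝 ((D : ℝ) / (2 * ((D : ℝ) + 1)))) := by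
  have hquad := tendsto_criticalPolynomial_div_sq hD
  set gc := criticalCoupling D
  set Gc := criticalTwoPoint D
  have hgc : 0 < gc := criticalCoupling_pos hD
  have hGc : 0 < Gc := by linarith [one_lt_criticalTwoPoint hD]
  have hDGc : (D : ℝ) + 1 = D * Gc := (natCast_mul_criticalTwoPoint hD).symm
  have hscale : Tendsto (fun x : ℝ => 1 / (gc * D ^ 2 * x ^ (D + 1))) (𝓝[<] Gc)
      (𝓝 (1 / (gc * D ^ 2 * Gc ^ (D + 1)))) :=
    ((continuousAt_const.div (by fun_prop) (by positivity)).tendsto).mono_left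
      nhdsWithin_le_nhds
  have hval : gc * (D + 1) * (D * Gc ^ (D - 1)) / 2 * (1 / (gc * D ^ 2 * Gc ^ (D + 1))) =
      (D : ℝ) / (2 * (D + 1)) := by
    rw [show Gc ^ (D + 1) = Gc ^ (D - 1) * Gc ^ 2 by rw [← pow_add]; congr 1; omega]
    field_simp
    rw [hDGc]
    ring
  refine (hval ▸ (hquad.mono_left (nhdsWithin_mono _ fun x hx => ne_of_lt hx)).mul
    hscale).congr' ?_
  filter_upwards [Ioo_mem_nhdsLT hGc] with x hx
  have : 0 < x := hx.1
  have : x - Gc ≠ 0 := sub_ne_zero.mpr hx.2.ne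
  have hsq : ((D : ℝ) + 1 - D * x) ^ 2 = D ^ 2 * (x - Gc) ^ 2 := by rw [hDGc]; ring
  rw [hsq, melonicCoupling]
  field_simp
  ring

end Melonic

def IsMelonicTwoPoint (D : ℕ) (G : ℝ → ℝ) : Prop :=
  ∀ g ∈ Icc 0 (criticalCoupling D),
    G g ∈ Icc 1 (criticalTwoPoint D) ∧ G g = 1 + g * G g ^ (D + 1)

namespace IsMelonicTwoPoint

variable {D : ℕ} {G : ℝ → ℝ} {g : ℝ}

lemma melonicCoupling_apply (hG : IsMelonicTwoPoint D G) (hg : g ∈ Icc 0 (criticalCoupling D)) :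
    melonicCoupling D (G g) = g :=
  melonicCoupling_eq_of_eq_one_add (by linarith [(hG g hg).1.1]) (hG g hg).2

lemma apply_melonicCoupling (hD : 1 ≤ D) (hG : IsMelonicTwoPoint D G) {x : ℝ}
    (hx : x ∈ Icc 1 (criticalTwoPoint D)) : G (melonicCoupling D x) = x := by
  have hψ := melonicCoupling_mem_Icc hD hx
  exact (strictMonoOn_melonicCoupling hD).injOn (hG _ hψ).1 hx (hG.melonicCoupling_apply hψ)

lemma apply_criticalCoupling (hD : 1 ≤ D) (hG : IsMelonicTwoPoint D G) :
    G (criticalCoupling D) = criticalTwoPoint D := by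
  simpa [melonicCoupling_criticalTwoPoint hD] using
    hG.apply_melonicCoupling hD ⟨(one_lt_criticalTwoPoint hD).le, le_rfl⟩

lemma one_lt (hG : IsMelonicTwoPoint D G) (hg : g ∈ Ioc 0 (criticalCoupling D)) : 1 < G g := by
  obtain ⟨⟨h1, -⟩, heq⟩ := hG g (Ioc_subset_Icc_self hg)
  rw [heq]
  exact lt_add_of_pos_right 1 (mul_pos hg.1 (by positivity))

lemma lt_criticalTwoPoint (hD : 1 ≤ D) (hG : IsMelonicTwoPoint D G)
    (hg : g ∈ Ico 0 (criticalCoupling D)) : G g < criticalTwoPoint D := by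
  refine lt_of_le_of_ne (hG g (Ico_subset_Icc_self hg)).1.2 fun h => hg.2.ne ?_
  rw [← hG.melonicCoupling_apply (Ico_subset_Icc_self hg), h, melonicCoupling_criticalTwoPoint hD]

lemma strictMonoOn (hD : 1 ≤ D) (hG : IsMelonicTwoPoint D G) :
    StrictMonoOn G (Icc 0 (criticalCoupling D)) := by
  intro g hg g' hg' hlt
  by_contra! hle
  have := (strictMonoOn_melonicCoupling hD).monotoneOn (hG g' hg').1 (hG g hg).1 hle
  rw [hG.melonicCoupling_apply hg, hG.melonicCoupling_apply hg'] at this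
  linarith

lemma image_Icc (hD : 1 ≤ D) (hG : IsMelonicTwoPoint D G) :
    G '' Icc 0 (criticalCoupling D) = Icc 1 (criticalTwoPoint D) :=
  Subset.antisymm (fun _ ⟨g, hg, hGg⟩ => hGg ▸ (hG g hg).1) fun _ hx =>
    ⟨_, melonicCoupling_mem_Icc hD hx, hG.apply_melonicCoupling hD hx⟩

lemma continuousAt (hD : 1 ≤ D) (hG : IsMelonicTwoPoint D G)
    (hg : g ∈ Ioo 0 (criticalCoupling D)) : ContinuousAt G g := by
  refine (hG.strictMonoOn hD).continuousAt_of_image_mem_nhds (Icc_mem_nhds hg.1 hg.2) ?_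
  rw [hG.image_Icc hD]
  exact Icc_mem_nhds (hG.one_lt (Ioo_subset_Ioc_self hg))
    (hG.lt_criticalTwoPoint hD (Ioo_subset_Ico_self hg))

lemma tendsto_nhdsLT (hD : 1 ≤ D) (hG : IsMelonicTwoPoint D G) :
    Tendsto G (𝓝[<] criticalCoupling D) (𝓝[<] criticalTwoPoint D) := by
  have hgc := criticalCoupling_pos hD
  have hcont : ContinuousWithinAt G (Iic (criticalCoupling D)) (criticalCoupling D) := by
    refine (hG.strictMonoOn hD).continuousWithinAt_left_of_image_mem_nhdsWithin
      (Icc_mem_nhdsLE hgc) ?_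
    rw [hG.image_Icc hD, hG.apply_criticalCoupling hD]
    exact Icc_mem_nhdsLE (one_lt_criticalTwoPoint hD)
  refine tendsto_nhdsWithin_iff.mpr ⟨?_, ?_⟩
  · simpa [hG.apply_criticalCoupling hD] using (hcont.mono Iio_subset_Iic_self).tendsto
  · filter_upwards [Ioo_mem_nhdsLT hgc] with g hg
    exact hG.lt_criticalTwoPoint hD (Ioo_subset_Ico_self hg)

lemma hasDerivAt (hD : 1 ≤ D) (hG : IsMelonicTwoPoint D G)
    (hg : g ∈ Ioo 0 (criticalCoupling D)) :
    HasDerivAt G (G g ^ (D + 2) / ((D : ℝ) + 1 - D * G g)) g := by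
  have h1 := hG.one_lt (Ioo_subset_Ioc_self hg)
  have hδ := sub_mul_pos_of_lt_criticalTwoPoint hD
    (hG.lt_criticalTwoPoint hD (Ioo_subset_Ico_self hg))
  simpa using HasDerivAt.of_local_left_inverse (hG.continuousAt hD hg)
    (hasDerivAt_melonicCoupling (by positivity)) (by positivity)
    (by filter_upwards [Ioo_mem_nhds hg.1 hg.2] with y hy
        using hG.melonicCoupling_apply (Ioo_subset_Icc_self hy))

theorem hasSum_fussCatalan (hD : 1 ≤ D) (hG : IsMelonicTwoPoint D G)
    (hg : g ∈ Ico 0 (criticalCoupling D)) : HasSum (fun k => fussCatalan D k * g ^ k) (G g) := by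
  obtain ⟨⟨hX1, hX2⟩, hXeq⟩ := hG g (Ico_subset_Icc_self hg)
  have hX : 0 ≤ G g := by linarith
  simp_rw [fussCatalan_eq_raney]
  have hL := tsum_raney_mul_pow_eq_one_add D.succ_pos hg.1 hX hXeq
  have hLX := tsum_raney_mul_pow_le D.succ_pos hg.1 hX hXeq 1
  rw [pow_one] at hLX
  set L := ∑' k, raney (D + 1) 1 k * g ^ k
  have hL1 : 1 ≤ L := hL ▸ le_add_of_nonneg_right
    (mul_nonneg hg.1 (pow_nonneg (tsum_nonneg fun k => mul_nonneg (raney_nonneg _ _ _)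
      (pow_nonneg hg.1 k)) _))
  have : L = G g := (strictMonoOn_melonicCoupling hD).injOn ⟨hL1, hLX.trans hX2⟩ ⟨hX1, hX2⟩
    (by rw [melonicCoupling_eq_of_eq_one_add (by linarith) hL,
      hG.melonicCoupling_apply (Ico_subset_Icc_self hg)])
  exact this ▸ (summable_raney_mul_pow D.succ_pos hg.1 hX hXeq 1).hasSum

end IsMelonicTwoPoint

def IsMelonicFreeEnergy (D : ℕ) (E : ℝ → ℝ) : Prop :=
  ∀ g ∈ Ico 0 (criticalCoupling D),
    HasSum (fun p : ℕ => fussCatalan D (p + 1) / ((p : ℝ) + 1) * g ^ (p + 1)) (E g)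

namespace IsMelonicFreeEnergy

variable {D : ℕ} {G E : ℝ → ℝ} {g : ℝ}

lemma hasDerivAt (hD : 1 ≤ D) (hG : IsMelonicTwoPoint D G) (hE : IsMelonicFreeEnergy D E)
    (hg : g ∈ Ioo 0 (criticalCoupling D)) : HasDerivAt E ((G g - 1) / g) g := by
  have hshift : ∀ {y}, y ∈ Ico 0 (criticalCoupling D) →
      HasSum (fun n => fussCatalan D (n + 1) * y ^ (n + 1)) (G y - 1) := fun hy => by
    simpa [fussCatalan] using (hasSum_nat_add_iff' 1).mpr (hG.hasSum_fussCatalan hD hy)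
  obtain ⟨r, hgr, hrc⟩ := exists_between hg.2
  have hr : 0 < r := hg.1.trans hgr
  have hc : Summable fun n => ‖fussCatalan D (n + 1)‖ * r ^ n := by
    refine ((hshift ⟨hr.le, hrc⟩).summable.mul_left r⁻¹).congr fun n => ?_
    rw [Real.norm_of_nonneg (fussCatalan_nonneg _ _), pow_succ]
    field_simp
  have hval : ∑' n, fussCatalan D (n + 1) * g ^ n = (G g - 1) / g := by
    rw [← ((hshift (Ioo_subset_Ico_self hg)).div_const g).tsum_eq]
    exact tsum_congr fun n => by field_simp [hg.1.ne']; ring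
  rw [← hval]
  refine (hasDerivAt_tsum_div_succ_mul_pow hc ?_).congr_of_eventuallyEq ?_
  · rwa [abs_of_pos hg.1]
  · filter_upwards [Ioo_mem_nhds hg.1 hg.2] with y hy
      using (hE y (Ioo_subset_Ico_self hy)).tsum_eq.symm

lemma deriv_deriv (hD : 1 ≤ D) (hG : IsMelonicTwoPoint D G) (hE : IsMelonicFreeEnergy D E)
    (hg : g ∈ Ioo 0 (criticalCoupling D)) :
    deriv (deriv E) g =
      (G g ^ (D + 2) / ((D : ℝ) + 1 - D * G g) * g - (G g - 1)) / g ^ 2 := by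
  have hE' : deriv E =ᶠ[𝓝 g] fun y => (G y - 1) / y := by
    filter_upwards [Ioo_mem_nhds hg.1 hg.2] with y hy using (hE.hasDerivAt hD hG hy).deriv
  rw [hE'.deriv_eq]
  exact (((hG.hasDerivAt hD hg).sub_const 1).div (hasDerivAt_id' g) hg.1.ne').deriv.trans
    (by simp)

theorem tendsto_sqrt_mul_deriv_deriv (hD : 1 ≤ D) (hG : IsMelonicTwoPoint D G)
    (hE : IsMelonicFreeEnergy D E) :
    Tendsto (fun g => √(1 - g / criticalCoupling D) * deriv (deriv E) g)
      (𝓝[<] criticalCoupling D)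
      (𝓝 (1 / criticalCoupling D * criticalTwoPoint D ^ (D + 2) *
        √((D : ℝ) / (2 * ((D : ℝ) + 1))))) := by
  set gc := criticalCoupling D
  set Gc := criticalTwoPoint D
  have hgc : 0 < gc := criticalCoupling_pos hD
  have hψGc : melonicCoupling D Gc = gc := melonicCoupling_criticalTwoPoint hD
  have hψ : ContinuousAt (melonicCoupling D) Gc :=
    (hasDerivAt_melonicCoupling (by linarith [one_lt_criticalTwoPoint hD])).continuousAt
  set Φ := fun x => √((1 - melonicCoupling D x / gc) / ((D : ℝ) + 1 - D * x) ^ 2) *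
    ((x ^ (D + 2) * melonicCoupling D x - (x - 1) * ((D : ℝ) + 1 - D * x)) /
      melonicCoupling D x ^ 2)
  have hΦ : Tendsto Φ (𝓝[<] Gc)
      (𝓝 (1 / gc * Gc ^ (D + 2) * √((D : ℝ) / (2 * ((D : ℝ) + 1))))) := by
    have hrat : ContinuousAt (fun x => (x ^ (D + 2) * melonicCoupling D x -
        (x - 1) * ((D : ℝ) + 1 - D * x)) / melonicCoupling D x ^ 2) Gc := by
      fun_prop (disch := simp [hψGc, hgc.ne'])
    have hδ : (D : ℝ) + 1 - D * Gc = 0 := by rw [natCast_mul_criticalTwoPoint hD, sub_self]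
    have hval : √((D : ℝ) / (2 * ((D : ℝ) + 1))) * ((Gc ^ (D + 2) * melonicCoupling D Gc -
        (Gc - 1) * ((D : ℝ) + 1 - D * Gc)) / melonicCoupling D Gc ^ 2) =
        1 / gc * Gc ^ (D + 2) * √((D : ℝ) / (2 * ((D : ℝ) + 1))) := by
      rw [hψGc, hδ]; field_simp; ring
    exact hval ▸ ((Real.continuous_sqrt.tendsto _).comp
      (tendsto_one_sub_melonicCoupling_div_sq hD)).mul (hrat.tendsto.mono_left nhdsWithin_le_nhds)
  refine (hΦ.comp (hG.tendsto_nhdsLT hD)).congr' ?_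
  filter_upwards [Ioo_mem_nhdsLT hgc] with g hg
  have hδ := sub_mul_pos_of_lt_criticalTwoPoint hD
    (hG.lt_criticalTwoPoint hD (Ioo_subset_Ico_self hg))
  simp only [Function.comp_apply, Φ, hG.melonicCoupling_apply (Ioo_subset_Icc_self hg),
    hE.deriv_deriv hD hG hg, Real.sqrt_div' _ (sq_nonneg _), Real.sqrt_sq hδ.le]
  have := hg.1
  field_simp

end IsMelonicFreeEnergy

/-- Let `D ≥ 1`, `g_c := D^D/(D+1)^(D+1)`, `G_LO` the leading-order melonic
2-point function, and `E_LO(g) := Σ_{p≥1} (C_p^(D+1)/p)·g^p` the leading-order free energy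
on `[0, g_c)`; it satisfies `g·E_LO'(g) = G_LO(g) − 1`, and
`lim_{g→g_c⁻} √(1 − g/g_c) · E_LO''(g) = (1/g_c)·((D+1)/D)^(D+2)·√(D/(2(D+1)))`,
i.e. the susceptibility exponent is `γ_LO = 1/2`. -/
theorem melonic_free_energy_critical_behaviour (D : ℕ) (hD : 1 ≤ D) (G_LO E_LO : ℝ → ℝ)
    (hG : ∀ g ∈ Set.Icc (0 : ℝ) ((D : ℝ) ^ D / ((D : ℝ) + 1) ^ (D + 1)),
      G_LO g ∈ Set.Icc (1 : ℝ) (((D : ℝ) + 1) / D) ∧ G_LO g = 1 + g * (G_LO g) ^ (D + 1))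
    (hE : ∀ g ∈ Set.Ico (0 : ℝ) ((D : ℝ) ^ D / ((D : ℝ) + 1) ^ (D + 1)),
      HasSum (fun p : ℕ => fussCatalan D (p + 1) / ((p : ℝ) + 1) * g ^ (p + 1)) (E_LO g)) :
    (∀ g ∈ Set.Ioo (0 : ℝ) ((D : ℝ) ^ D / ((D : ℝ) + 1) ^ (D + 1)),
      g * deriv E_LO g = G_LO g - 1) ∧
    Filter.Tendsto
      (fun g : ℝ => Real.sqrt (1 - g / ((D : ℝ) ^ D / ((D : ℝ) + 1) ^ (D + 1))) *
        deriv (deriv E_LO) g)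
      (nhdsWithin ((D : ℝ) ^ D / ((D : ℝ) + 1) ^ (D + 1))
        (Set.Iio ((D : ℝ) ^ D / ((D : ℝ) + 1) ^ (D + 1))))
      (nhds ((1 / ((D : ℝ) ^ D / ((D : ℝ) + 1) ^ (D + 1))) *
        (((D : ℝ) + 1) / D) ^ (D + 2) * Real.sqrt ((D : ℝ) / (2 * ((D : ℝ) + 1))))) := by
  refine ⟨fun g hg => ?_, IsMelonicFreeEnergy.tendsto_sqrt_mul_deriv_deriv hD hG hE⟩
  rw [(IsMelonicFreeEnergy.hasDerivAt hD hG hE hg).deriv, mul_div_cancel₀ _ hg.1.ne']
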